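/- arXiv:2208.06323 — 4 statements merged into one kernel-verified Lean document; each statement's English description precedes it below -/
import Mathlib

section
/- Let δ(A) = α·|A| − |E(A)| be the predimension with α > 0. For finite graphs A ⊆ B define A ≤* B (self-sufficiency) to mean δ(A) ≤ δ(B') for all B' with A ⊆ B' ⊆ B. Then self-sufficiency is transitive: if A ≤* B and B ≤* C then A ≤* C. -/
/-!
The predimension is submodular: cardinality is modular and the number of induced edges is
supermodular, since an edge inside `s ∩ t` lies inside both `s` and `t`, and one inside `s` or
inside `t` lies inside `s ∪ t`. Given `A ⊆ B' ⊆ C`, apply `A ≤* B` to `B' ∩ B` and `B ≤* C` to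
`B' ∪ B`; submodularity for `B'` and `B` then gives `δ(A) ≤ δ(B' ∩ B) ≤ δ(B')`.
-/

def edgeCount {V : Type*} [Fintype V] [DecidableEq V] (G : SimpleGraph V)
    [DecidableRel G.Adj] (s : Finset V) : ℕ :=
  (G.edgeFinset ∩ s.sym2).card

noncomputable def pdim {V : Type*} [Fintype V] [DecidableEq V] (α : ℝ) (G : SimpleGraph V)
    [DecidableRel G.Adj] (s : Finset V) : ℝ :=
  α * s.card - edgeCount G s

/-- `A ≤* B` : self-sufficiency of `A` in `B`. -/
def leqStar {V : Type*} [Fintype V] [DecidableEq V] (α : ℝ) (G : SimpleGraph V)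
    [DecidableRel G.Adj] (A B : Finset V) : Prop :=
  A ⊆ B ∧ ∀ B' : Finset V, A ⊆ B' → B' ⊆ B → pdim α G A ≤ pdim α G B'

theorem Finset.sym2_inter {α : Type*} [DecidableEq α] (s t : Finset α) :
    (s ∩ t).sym2 = s.sym2 ∩ t.sym2 := by
  ext m
  simp only [Finset.mem_inter, Finset.mem_sym2_iff, ← forall_and]

section Predimension

variable {V : Type*} [Fintype V] [DecidableEq V] (G : SimpleGraph V) [DecidableRel G.Adj]

theorem edgeCount_add_edgeCount_le (s t : Finset V) :
    edgeCount G s + edgeCount G t ≤ edgeCount G (s ∪ t) + edgeCount G (s ∩ t) := by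
  have h_union : G.edgeFinset ∩ s.sym2 ∪ G.edgeFinset ∩ t.sym2 ⊆ G.edgeFinset ∩ (s ∪ t).sym2 := by
    rw [← Finset.inter_union_distrib_left]
    exact Finset.inter_subset_inter_left
      (Finset.union_subset (Finset.sym2_mono Finset.subset_union_left)
        (Finset.sym2_mono Finset.subset_union_right))
  have h_inter : G.edgeFinset ∩ s.sym2 ∩ (G.edgeFinset ∩ t.sym2) =
      G.edgeFinset ∩ (s ∩ t).sym2 := by
    rw [Finset.sym2_inter, ← Finset.inter_inter_distrib_left]
  unfold edgeCount
  rw [← Finset.card_union_add_card_inter, h_inter]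
  exact Nat.add_le_add_right (Finset.card_le_card h_union) _

theorem pdim_union_add_pdim_inter_le (α : ℝ) (s t : Finset V) :
    pdim α G (s ∪ t) + pdim α G (s ∩ t) ≤ pdim α G s + pdim α G t := by
  have h_card : ((s ∪ t).card : ℝ) + (s ∩ t).card = s.card + t.card := by
    exact_mod_cast Finset.card_union_add_card_inter s t
  have h_edge : (edgeCount G s : ℝ) + edgeCount G t ≤
      edgeCount G (s ∪ t) + edgeCount G (s ∩ t) := by
    exact_mod_cast edgeCount_add_edgeCount_le G s t
  unfold pdim
  linear_combination α * h_card + h_edge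

end Predimension

theorem leqStar_trans_general {V : Type*} [Fintype V] [DecidableEq V] (G : SimpleGraph V)
    [DecidableRel G.Adj] (α : ℝ) (A B C : Finset V)
    (hAB : leqStar α G A B) (hBC : leqStar α G B C) : leqStar α G A C := by
  obtain ⟨hAB_sub, hAB_le⟩ := hAB
  obtain ⟨hBC_sub, hBC_le⟩ := hBC
  refine ⟨hAB_sub.trans hBC_sub, fun B' hAB' hB'C => ?_⟩
  have h_inter : pdim α G A ≤ pdim α G (B' ∩ B) :=
    hAB_le _ (Finset.subset_inter hAB' hAB_sub) Finset.inter_subset_right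
  have h_union : pdim α G B ≤ pdim α G (B' ∪ B) :=
    hBC_le _ Finset.subset_union_right (Finset.union_subset hB'C hBC_sub)
  linarith [pdim_union_add_pdim_inter_le G α B' B]

/-- Self-sufficiency is transitive. -/
theorem leqStar_trans {V : Type*} [Fintype V] [DecidableEq V] (G : SimpleGraph V)
    [DecidableRel G.Adj] (α : ℝ) (hα : 0 < α) (A B C : Finset V)
    (hAB : leqStar α G A B) (hBC : leqStar α G B C) : leqStar α G A C :=
  leqStar_trans_general G α A B C hAB hBC
end

section
/- Suppose real numbers λ, μ₁, μ₂, μ₃, μ₄ ≥ 0 satisfy: μ₁ = λ³; μ₂ + μ₁ = λ(1 − λ²); λ² < 1; μ₃ = μ₂²/(1 − λ²); μ₄ = λ⁴; and μ₃ + μ₄ = (1 − λ²)²·λ². Then λ = 0. -/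
/-! Eliminating `μ₁` and `μ₄` gives `μ₂ = λ - 2λ³`, and clearing the denominator `1 - λ²` in the
last equation leaves `λ²(1 - 2λ²)² + λ⁴(1 - λ²) = λ²(1 - λ²)³`. Both sides expand to
`λ² - 3λ⁴ + 3λ⁶`, except for the term `-λ⁸` on the right, so `λ⁸ = 0`. -/

theorem eq_zero_of_sq_div_one_sub_sq_add_pow_four_eq {K : Type*} [Field K] {x : K}
    (hx : 1 - x ^ 2 ≠ 0)
    (h : (x - 2 * x ^ 3) ^ 2 / (1 - x ^ 2) + x ^ 4 = (1 - x ^ 2) ^ 2 * x ^ 2) :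
    x = 0 := by
  rw [div_add' _ _ _ hx, div_eq_iff hx] at h
  have h8 : x ^ 8 = 0 := by linear_combination h
  exact pow_eq_zero_iff (by norm_num) |>.mp h8

theorem measure_equations_force_zero_general (lam μ₁ μ₂ μ₃ μ₄ : ℝ)
    (e1 : μ₁ = lam ^ 3)
    (e2 : μ₂ + μ₁ = lam * (1 - lam ^ 2))
    (hlt : lam ^ 2 < 1)
    (e3 : μ₃ = μ₂ ^ 2 / (1 - lam ^ 2))
    (e4 : μ₄ = lam ^ 4)
    (e5 : μ₃ + μ₄ = (1 - lam ^ 2) ^ 2 * lam ^ 2) :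
    lam = 0 := by
  have hμ₂ : μ₂ = lam - 2 * lam ^ 3 := by linear_combination e2 - e1
  subst e3 e4 hμ₂
  exact eq_zero_of_sq_div_one_sub_sq_add_pow_four_eq (sub_ne_zero.2 hlt.ne') e5

/-- The algebraic core of the non-MS-measurability proof: the system of equations
satisfied by the putative measures forces the measure `λ` of an edge to be `0`. -/
theorem measure_equations_force_zero (lam μ₁ μ₂ μ₃ μ₄ : ℝ)
    (h0 : 0 ≤ lam) (h1 : 0 ≤ μ₁) (h2 : 0 ≤ μ₂) (h3 : 0 ≤ μ₃) (h4 : 0 ≤ μ₄)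
    (e1 : μ₁ = lam ^ 3)
    (e2 : μ₂ + μ₁ = lam * (1 - lam ^ 2))
    (hlt : lam ^ 2 < 1)
    (e3 : μ₃ = μ₂ ^ 2 / (1 - lam ^ 2))
    (e4 : μ₄ = lam ^ 4)
    (e5 : μ₃ + μ₄ = (1 - lam ^ 2) ^ 2 * lam ^ 2) :
    lam = 0 :=
  measure_equations_force_zero_general lam μ₁ μ₂ μ₃ μ₄ e1 e2 hlt e3 e4 e5
end

section
/- Let α = 2 with δ(X) = 2|X| − |E(X)|, and f with f(1)=2, f(2)=3, f(3)=4, f(6) ≤ 6, increasing. Then the unique proper independence theorem diagram D for K_f with d₁₂ := max δ(D_{ij}) ≤ 4 is the 6-cycle: it has |D₀| = 0, each |Dᵢ| = 1 (i = 1,2,3), each D_{ij} a path of length 2 with the Dᵢ as endpoints, and δ(D) = 6 ≥ f(6), so f(|D|) ≤ δ(D). -/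
def dClosedIn {V : Type*} [Fintype V] [DecidableEq V] (α : ℝ) (G : SimpleGraph V)
    [DecidableRel G.Adj] (A B : Finset V) : Prop :=
  A ⊆ B ∧ ∀ B' : Finset V, A ⊂ B' → B' ⊆ B → pdim α G A < pdim α G B'

def inKf {V : Type*} [Fintype V] [DecidableEq V] (f : ℝ → ℝ) (G : SimpleGraph V)
    [DecidableRel G.Adj] (A : Finset V) : Prop :=
  ∀ A' ⊆ A, A'.Nonempty → f A'.card ≤ pdim 2 G A'

/-!
Since `δ(D_{ij}) ≤ 4 = f(3)` and `D_{ij} ∈ K_f`, monotonicity of `f` gives `|D_{ij}| ≤ 3`; with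
`D₀ ⊊ Dᵢ, D_j` and `Dᵢ ∪ D_j ⊊ D_{ij}` this leaves only `D₀ = ∅`, `|Dᵢ| = 1` and `|D_{ij}| = 3`.
Free amalgamation makes `Dᵢ ∪ D_j` a non-adjacent pair of predimension `4`, so the equality
`δ(Dᵢ ∪ D_j) = δ(D_{ij})` forces the third vertex of `D_{ij}` to be joined to both.
As every edge of `D` lies in some `D_{ij}`, inclusion–exclusion applies to edges as well as to
vertices, so `δ` is modular over the diagram: `δ(D) = 3·4 - 3·2 + 0 = 6`, and `|D| = 9 - 3 = 6`.
-/

open Finset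

theorem Finset.card_union_union_add_card_inter {α : Type*} [DecidableEq α] (A B C : Finset α) :
    #(A ∪ B ∪ C) + #(A ∩ B) + #(A ∩ C) + #(B ∩ C) = #A + #B + #C + #(A ∩ B ∩ C) := by
  have hABC := card_union_add_card_inter (A ∪ B) C
  have hAB := card_union_add_card_inter A B
  have hC := card_union_add_card_inter (A ∩ C) (B ∩ C)
  rw [union_inter_distrib_right] at hABC
  rw [inter_inter_inter_comm, inter_self] at hC
  omega

theorem Finset.eq_empty_and_card_eq_of_inter_eq_of_card_le_three {α : Type*} [DecidableEq α]
    {D₀ D₁ D₂ D : Finset α} (h₁ : D₀ ⊂ D₁) (h₂ : D₀ ⊂ D₂) (hi : D₁ ∩ D₂ = D₀)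
    (hD : D₁ ∪ D₂ ⊂ D) (h3 : #D ≤ 3) :
    D₀ = ∅ ∧ #D₁ = 1 ∧ #D₂ = 1 ∧ #D = 3 := by
  have := card_lt_card h₁
  have := card_lt_card h₂
  have := card_lt_card hD
  have := card_union_add_card_inter D₁ D₂
  rw [hi] at this
  refine ⟨card_eq_zero.1 ?_, ?_, ?_, ?_⟩ <;> omega

section
variable {V : Type*} [Fintype V] [DecidableEq V] (G : SimpleGraph V) [DecidableRel G.Adj]

def edgesIn (s : Finset V) : Finset (Sym2 V) := G.edgeFinset ∩ s.sym2

def EdgesCoveredBy (A B C : Finset V) : Prop :=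
  ∀ u ∈ A ∪ B ∪ C, ∀ v ∈ A ∪ B ∪ C, G.Adj u v →
    (({u, v} : Finset V) ⊆ A ∨ ({u, v} : Finset V) ⊆ B ∨ ({u, v} : Finset V) ⊆ C)

theorem edgesIn_inter (s t : Finset V) : edgesIn G (s ∩ t) = edgesIn G s ∩ edgesIn G t := by
  ext e
  simp only [edgesIn, mem_inter, mem_sym2_iff, forall_and]
  tauto

theorem edgesIn_union_union {A B C : Finset V} (hedges : EdgesCoveredBy G A B C) :
    edgesIn G (A ∪ B ∪ C) = edgesIn G A ∪ edgesIn G B ∪ edgesIn G C := by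
  ext e
  induction e using Sym2.ind with
  | _ u v =>
    simp only [edgesIn, mem_union, mem_inter, SimpleGraph.mem_edgeFinset,
      SimpleGraph.mem_edgeSet, mk_mem_sym2_iff]
    constructor
    · rintro ⟨huv, hu, hv⟩
      have := hedges u (by simpa [or_assoc] using hu) v (by simpa [or_assoc] using hv) huv
      simp only [insert_subset_iff, singleton_subset_iff] at this
      tauto
    · tauto

theorem edgeCount_eq_card_edgesIn (s : Finset V) : edgeCount G s = #(edgesIn G s) := rfl

theorem pdim_union_union_add_pdim_inter (α : ℝ) {A B C : Finset V}
    (hedges : EdgesCoveredBy G A B C) :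
    pdim α G (A ∪ B ∪ C) + pdim α G (A ∩ B) + pdim α G (A ∩ C) + pdim α G (B ∩ C) =
      pdim α G A + pdim α G B + pdim α G C + pdim α G (A ∩ B ∩ C) := by
  have hV := congrArg (Nat.cast : ℕ → ℝ) (card_union_union_add_card_inter A B C)
  have hE := congrArg (Nat.cast : ℕ → ℝ)
    (card_union_union_add_card_inter (edgesIn G A) (edgesIn G B) (edgesIn G C))
  simp only [← edgesIn_inter, ← edgesIn_union_union G hedges, ← edgeCount_eq_card_edgesIn]
    at hE
  simp only [pdim]
  push_cast at hV hE
  linear_combination α * hV - hE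

theorem pdim_empty (α : ℝ) : pdim α G ∅ = 0 := by simp [pdim, edgeCount]

theorem pdim_of_card_eq_one (α : ℝ) {s : Finset V} (hs : #s = 1) : pdim α G s = α := by
  obtain ⟨a, rfl⟩ := card_eq_one.1 hs
  simp [pdim, edgeCount]

theorem edgeCount_pair_of_not_adj {a b : V} (h : ¬ G.Adj a b) : edgeCount G {a, b} = 0 := by
  rw [edgeCount_eq_card_edgesIn, card_eq_zero, eq_empty_iff_forall_notMem]
  intro e
  induction e using Sym2.ind with
  | _ u v =>
    simp only [edgesIn, mem_inter, SimpleGraph.mem_edgeFinset, SimpleGraph.mem_edgeSet,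
      mk_mem_sym2_iff, mem_insert, mem_singleton]
    grind [SimpleGraph.adj_comm, SimpleGraph.irrefl]

theorem card_le_of_inKf {f : ℝ → ℝ} (hmono : ∀ ⦃s t : ℝ⦄, 0 < s → s < t → f s < f t)
    {A : Finset V} (hA : inKf f G A) (hne : A.Nonempty) {n : ℕ} (hn : 0 < n)
    (hd : pdim 2 G A ≤ f n) : #A ≤ n := by
  by_contra! h
  have := hmono (by positivity) (by exact_mod_cast h : (n : ℝ) < #A)
  linarith [hA A Subset.rfl hne]

theorem edgeCount_eq_two_and_card_filter_adj_eq_one {a b : V} {S : Finset V} (hab : a ≠ b)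
    (hnadj : ¬ G.Adj a b) (hsub : {a, b} ⊆ S) (hS : #S = 3)
    (hpd : pdim 2 G {a, b} = pdim 2 G S) :
    edgeCount G S = 2 ∧ ∀ v ∈ ({a, b} : Finset V), #(S.filter (G.Adj v)) = 1 := by
  have he : edgeCount G S = 2 := by
    simp only [pdim, card_pair hab, hS, edgeCount_pair_of_not_adj G hnadj] at hpd
    push_cast at hpd
    exact_mod_cast (by linarith : (edgeCount G S : ℝ) = 2)
  obtain ⟨c, hc⟩ := card_eq_one.1 (by rw [card_sdiff_of_subset hsub, hS, card_pair hab] :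
    #(S \ {a, b}) = 1)
  have hcS : S = {a, b, c} := by
    rw [← sdiff_union_of_subset hsub, hc]
    ext
    simp only [mem_union, mem_insert, mem_singleton]
    tauto
  have hca : c ≠ a := by rintro rfl; simpa using hc.symm.subset (mem_singleton_self _)
  have hcb : c ≠ b := by rintro rfl; simpa using hc.symm.subset (mem_singleton_self _)
  have hsub' : edgesIn G S ⊆ {s(a, c), s(b, c)} := by
    intro e
    induction e using Sym2.ind with
    | _ u v =>
      simp only [edgesIn, hcS, mem_inter, SimpleGraph.mem_edgeFinset, SimpleGraph.mem_edgeSet,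
        mk_mem_sym2_iff, mem_insert, mem_singleton, Sym2.eq_iff]
      grind [SimpleGraph.adj_comm, SimpleGraph.irrefl]
  have hE : edgesIn G S = {s(a, c), s(b, c)} :=
    eq_of_subset_of_card_le hsub' <| by
      rw [← edgeCount_eq_card_edgesIn, he, card_pair (by simp [hab, hca.symm])]
  have hac : s(a, c) ∈ edgesIn G S := by simp [hE]
  have hbc : s(b, c) ∈ edgesIn G S := by simp [hE]
  simp only [edgesIn, mem_inter, SimpleGraph.mem_edgeFinset, SimpleGraph.mem_edgeSet] at hac hbc
  refine ⟨he, fun v hv => card_eq_one.2 ⟨c, ?_⟩⟩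
  ext x
  simp only [hcS, mem_insert, mem_singleton, mem_filter] at hv ⊢
  grind [SimpleGraph.adj_comm, SimpleGraph.irrefl]

theorem closure_of_free_amalgam_is_path_of_pdim_le_four {f : ℝ → ℝ}
    (hmono : ∀ ⦃s t : ℝ⦄, 0 < s → s < t → f s < f t) (hf3 : f 3 = 4)
    {D₀ D₁ D₂ D : Finset V} (h₁ : D₀ ⊂ D₁) (h₂ : D₀ ⊂ D₂) (hK : inKf f G D)
    (hi : D₁ ∩ D₂ = D₀) (hfree : ∀ u ∈ D₁ \ D₀, ∀ v ∈ D₂ \ D₀, ¬ G.Adj u v)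
    (hD : D₁ ∪ D₂ ⊂ D) (hpd : pdim 2 G (D₁ ∪ D₂) = pdim 2 G D) (hd : pdim 2 G D ≤ 4) :
    D₀ = ∅ ∧ #D₁ = 1 ∧ #D₂ = 1 ∧
      (#D = 3 ∧ edgeCount G D = 2 ∧ ∀ v ∈ D₁ ∪ D₂, #(D.filter (G.Adj v)) = 1) ∧
      pdim 2 G D = 4 := by
  have hne : D.Nonempty := card_pos.1 <| Nat.zero_lt_of_lt <|
    card_lt_card (h₁.trans_subset (subset_union_left.trans hD.subset))
  have h3 : #D ≤ 3 := card_le_of_inKf G hmono hK hne three_pos (by rwa [Nat.cast_ofNat, hf3])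
  obtain ⟨rfl, h₁, h₂, hD3⟩ := eq_empty_and_card_eq_of_inter_eq_of_card_le_three h₁ h₂ hi hD h3
  obtain ⟨a, rfl⟩ := card_eq_one.1 h₁
  obtain ⟨b, rfl⟩ := card_eq_one.1 h₂
  have hab : a ≠ b := by rintro rfl; simp at hi
  have hnadj : ¬ G.Adj a b := hfree a (by simp) b (by simp)
  rw [← insert_eq] at hD hpd ⊢
  refine ⟨rfl, h₁, h₂,
    ⟨hD3, edgeCount_eq_two_and_card_filter_adj_eq_one G hab hnadj hD.subset hD3 hpd⟩, ?_⟩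
  rw [← hpd, pdim, card_pair hab, edgeCount_pair_of_not_adj G hnadj]
  norm_num

end

theorem proper_ITD_is_hexagon_general {V : Type*} [Fintype V] [DecidableEq V] (G : SimpleGraph V)
    [DecidableRel G.Adj] (f : ℝ → ℝ)
    (hmono : ∀ ⦃s t : ℝ⦄, 0 < s → s < t → f s < f t)
    (hf3 : f 3 = 4) (hf6 : f 6 ≤ 6)
    (D₀ D₁ D₂ D₃ D₁₂ D₁₃ D₂₃ : Finset V)
    -- the diagram is proper
    (hp1 : D₀ ⊂ D₁) (hp2 : D₀ ⊂ D₂) (hp3 : D₀ ⊂ D₃)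
    -- all pieces are in K_f
    (hK12 : inKf f G D₁₂) (hK13 : inKf f G D₁₃) (hK23 : inKf f G D₂₃)
    -- intersection conditions
    (hi12 : D₁ ∩ D₂ = D₀) (hi13 : D₁ ∩ D₃ = D₀) (hi23 : D₂ ∩ D₃ = D₀)
    (hm12 : D₁₂ ∩ D₁₃ = D₁) (hm21 : D₁₂ ∩ D₂₃ = D₂) (hm31 : D₁₃ ∩ D₂₃ = D₃)
    -- `Dᵢ` and `D_j` are freely amalgamated over `D₀` in `D_{ij}`
    (hf12 : ∀ u ∈ D₁ \ D₀, ∀ v ∈ D₂ \ D₀, ¬ G.Adj u v)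
    (hf13 : ∀ u ∈ D₁ \ D₀, ∀ v ∈ D₃ \ D₀, ¬ G.Adj u v)
    (hf23 : ∀ u ∈ D₂ \ D₀, ∀ v ∈ D₃ \ D₀, ¬ G.Adj u v)
    -- `Dᵢ ∪ D_j ⊊ D_{ij}` is self-sufficient with the same predimension (eventual closure)
    (hc12 : D₁ ∪ D₂ ⊂ D₁₂ ∧ leqStar 2 G (D₁ ∪ D₂) D₁₂ ∧
      pdim 2 G (D₁ ∪ D₂) = pdim 2 G D₁₂)
    (hc13 : D₁ ∪ D₃ ⊂ D₁₃ ∧ leqStar 2 G (D₁ ∪ D₃) D₁₃ ∧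
      pdim 2 G (D₁ ∪ D₃) = pdim 2 G D₁₃)
    (hc23 : D₂ ∪ D₃ ⊂ D₂₃ ∧ leqStar 2 G (D₂ ∪ D₃) D₂₃ ∧
      pdim 2 G (D₂ ∪ D₃) = pdim 2 G D₂₃)
    -- every edge of `D` lies within some `D_{ij}`
    (hedges : ∀ u ∈ D₁₂ ∪ D₁₃ ∪ D₂₃, ∀ v ∈ D₁₂ ∪ D₁₃ ∪ D₂₃, G.Adj u v →
      (({u, v} : Finset V) ⊆ D₁₂ ∨ ({u, v} : Finset V) ⊆ D₁₃ ∨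
        ({u, v} : Finset V) ⊆ D₂₃))
    -- `d₁₂ = max δ(D_{ij}) ≤ 4`
    (hd12 : pdim 2 G D₁₂ ≤ 4) (hd13 : pdim 2 G D₁₃ ≤ 4) (hd23 : pdim 2 G D₂₃ ≤ 4) :
    D₀ = ∅ ∧ D₁.card = 1 ∧ D₂.card = 1 ∧ D₃.card = 1 ∧
    (D₁₂.card = 3 ∧ edgeCount G D₁₂ = 2 ∧
      ∀ v ∈ D₁ ∪ D₂, (D₁₂.filter (G.Adj v)).card = 1) ∧
    (D₁₃.card = 3 ∧ edgeCount G D₁₃ = 2 ∧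
      ∀ v ∈ D₁ ∪ D₃, (D₁₃.filter (G.Adj v)).card = 1) ∧
    (D₂₃.card = 3 ∧ edgeCount G D₂₃ = 2 ∧
      ∀ v ∈ D₂ ∪ D₃, (D₂₃.filter (G.Adj v)).card = 1) ∧
    pdim 2 G (D₁₂ ∪ D₁₃ ∪ D₂₃) = 6 ∧
    f ((D₁₂ ∪ D₁₃ ∪ D₂₃).card) ≤ pdim 2 G (D₁₂ ∪ D₁₃ ∪ D₂₃) := by
  obtain ⟨h0, h1, h2, h12, hp12⟩ := closure_of_free_amalgam_is_path_of_pdim_le_four G hmono hf3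
    hp1 hp2 hK12 hi12 hf12 hc12.1 hc12.2.2 hd12
  obtain ⟨-, -, h3, h13, hp13⟩ := closure_of_free_amalgam_is_path_of_pdim_le_four G hmono hf3
    hp1 hp3 hK13 hi13 hf13 hc13.1 hc13.2.2 hd13
  obtain ⟨-, -, -, h23, hp23⟩ := closure_of_free_amalgam_is_path_of_pdim_le_four G hmono hf3
    hp2 hp3 hK23 hi23 hf23 hc23.1 hc23.2.2 hd23
  have htriple : D₁₂ ∩ D₁₃ ∩ D₂₃ = D₀ := by
    rw [← hi12, ← hm12, ← hm21]; ext; simp only [mem_inter]; tauto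
  have hcard : #(D₁₂ ∪ D₁₃ ∪ D₂₃) = 6 := by
    have := card_union_union_add_card_inter D₁₂ D₁₃ D₂₃
    rw [htriple, hm12, hm21, hm31, h0] at this
    simp only [h1, h2, h3, h12.1, h13.1, h23.1, card_empty] at this
    omega
  have hpdim : pdim 2 G (D₁₂ ∪ D₁₃ ∪ D₂₃) = 6 := by
    have := pdim_union_union_add_pdim_inter G 2 hedges
    rw [htriple, hm12, hm21, hm31, h0, pdim_empty, pdim_of_card_eq_one G 2 h1,
      pdim_of_card_eq_one G 2 h2, pdim_of_card_eq_one G 2 h3, hp12, hp13, hp23] at this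
    linarith
  refine ⟨h0, h1, h2, h3, h12, h13, h23, hpdim, ?_⟩
  rw [hpdim, hcard]
  exact_mod_cast hf6

/-- The unique proper independence theorem diagram for `K_f` with
`d₁₂ = max δ(D_{ij}) ≤ 4` is the `6`-cycle: `D₀ = ∅`, each `Dᵢ` is a single vertex,
each `D_{ij}` is a path of length `2` with the vertices of `Dᵢ`, `D_j` as endpoints,
and `δ(D) = 6 ≥ f(|D|)`. -/
theorem proper_ITD_is_hexagon {V : Type*} [Fintype V] [DecidableEq V] (G : SimpleGraph V)
    [DecidableRel G.Adj] (f : ℝ → ℝ)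
    (hmono : ∀ ⦃s t : ℝ⦄, 0 < s → s < t → f s < f t)
    (hf1 : f 1 = 2) (hf2 : f 2 = 3) (hf3 : f 3 = 4) (hf6 : f 6 ≤ 6)
    (D₀ D₁ D₂ D₃ D₁₂ D₁₃ D₂₃ : Finset V)
    -- the diagram is proper
    (hp1 : D₀ ⊂ D₁) (hp2 : D₀ ⊂ D₂) (hp3 : D₀ ⊂ D₃)
    -- all pieces are in K_f
    (hK1 : inKf f G D₁) (hK2 : inKf f G D₂) (hK3 : inKf f G D₃)
    (hK12 : inKf f G D₁₂) (hK13 : inKf f G D₁₃) (hK23 : inKf f G D₂₃)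
    -- intersection conditions
    (hi12 : D₁ ∩ D₂ = D₀) (hi13 : D₁ ∩ D₃ = D₀) (hi23 : D₂ ∩ D₃ = D₀)
    (hm12 : D₁₂ ∩ D₁₃ = D₁) (hm21 : D₁₂ ∩ D₂₃ = D₂) (hm31 : D₁₃ ∩ D₂₃ = D₃)
    -- `Dᵢ, D_j ≤ D_{ij}`
    (hd112 : dClosedIn 2 G D₁ D₁₂) (hd212 : dClosedIn 2 G D₂ D₁₂)
    (hd113 : dClosedIn 2 G D₁ D₁₃) (hd313 : dClosedIn 2 G D₃ D₁₃)
    (hd223 : dClosedIn 2 G D₂ D₂₃) (hd323 : dClosedIn 2 G D₃ D₂₃)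
    -- `Dᵢ` and `D_j` are freely amalgamated over `D₀` in `D_{ij}`
    (hf12 : ∀ u ∈ D₁ \ D₀, ∀ v ∈ D₂ \ D₀, ¬ G.Adj u v)
    (hf13 : ∀ u ∈ D₁ \ D₀, ∀ v ∈ D₃ \ D₀, ¬ G.Adj u v)
    (hf23 : ∀ u ∈ D₂ \ D₀, ∀ v ∈ D₃ \ D₀, ¬ G.Adj u v)
    -- `Dᵢ ∪ D_j ⊊ D_{ij}` is self-sufficient with the same predimension (eventual closure)
    (hc12 : D₁ ∪ D₂ ⊂ D₁₂ ∧ leqStar 2 G (D₁ ∪ D₂) D₁₂ ∧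
      pdim 2 G (D₁ ∪ D₂) = pdim 2 G D₁₂)
    (hc13 : D₁ ∪ D₃ ⊂ D₁₃ ∧ leqStar 2 G (D₁ ∪ D₃) D₁₃ ∧
      pdim 2 G (D₁ ∪ D₃) = pdim 2 G D₁₃)
    (hc23 : D₂ ∪ D₃ ⊂ D₂₃ ∧ leqStar 2 G (D₂ ∪ D₃) D₂₃ ∧
      pdim 2 G (D₂ ∪ D₃) = pdim 2 G D₂₃)
    -- every edge of `D` lies within some `D_{ij}`
    (hedges : ∀ u ∈ D₁₂ ∪ D₁₃ ∪ D₂₃, ∀ v ∈ D₁₂ ∪ D₁₃ ∪ D₂₃, G.Adj u v →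
      (({u, v} : Finset V) ⊆ D₁₂ ∨ ({u, v} : Finset V) ⊆ D₁₃ ∨
        ({u, v} : Finset V) ⊆ D₂₃))
    -- `d₁₂ = max δ(D_{ij}) ≤ 4`
    (hd12 : pdim 2 G D₁₂ ≤ 4) (hd13 : pdim 2 G D₁₃ ≤ 4) (hd23 : pdim 2 G D₂₃ ≤ 4) :
    D₀ = ∅ ∧ D₁.card = 1 ∧ D₂.card = 1 ∧ D₃.card = 1 ∧
    (D₁₂.card = 3 ∧ edgeCount G D₁₂ = 2 ∧
      ∀ v ∈ D₁ ∪ D₂, (D₁₂.filter (G.Adj v)).card = 1) ∧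
    (D₁₃.card = 3 ∧ edgeCount G D₁₃ = 2 ∧
      ∀ v ∈ D₁ ∪ D₃, (D₁₃.filter (G.Adj v)).card = 1) ∧
    (D₂₃.card = 3 ∧ edgeCount G D₂₃ = 2 ∧
      ∀ v ∈ D₂ ∪ D₃, (D₂₃.filter (G.Adj v)).card = 1) ∧
    pdim 2 G (D₁₂ ∪ D₁₃ ∪ D₂₃) = 6 ∧
    f ((D₁₂ ∪ D₁₃ ∪ D₂₃).card) ≤ pdim 2 G (D₁₂ ∪ D₁₃ ∪ D₂₃) :=
  proper_ITD_is_hexagon_general G f hmono hf3 hf6 D₀ D₁ D₂ D₃ D₁₂ D₁₃ D₂₃ hp1 hp2 hp3 hK12 hK13 hK23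
    hi12 hi13 hi23 hm12 hm21 hm31 hf12 hf13 hf23 hc12 hc13 hc23 hedges hd12 hd13 hd23
end

section
/- Let δ(X) = 2|X| − |E(X)| and suppose B, C ∈ K_f with A = B ∩ C, A ≤ B and A ≤ C. If every vertex of B∖A is at distance ≤ 3 in B ⨿_A C from every vertex of C∖A, and K_f contains no cycles of length < 6, then B ⨿_A C admits no one-point closure: there is no graph D = (B ⨿_A C) ∪ {w} with w adjacent to exactly two vertices, one in B∖A and one in C∖A, such that D ∈ K_f. -/
/-- No one-point closure of the free amalgam `B ⨿_A C` exists when every vertex of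
`B∖A` is at distance at most `3` from every vertex of `C∖A` and all graphs of `K_f`
have girth at least `6`: a new vertex `w` joined to exactly one vertex of `B∖A` and one
vertex of `C∖A` would create a cycle of length `< 6`, so `(B ∪ C) ∪ {w} ∉ K_f`. -/
theorem no_one_point_closure {V : Type*} [Fintype V] [DecidableEq V] (G : SimpleGraph V)
    [DecidableRel G.Adj] (f : ℝ → ℝ) (A B C : Finset V) (w : V)
    (hA : A = B ∩ C)
    (hdcB : dClosedIn 2 G A B) (hdcC : dClosedIn 2 G A C)
    -- `B` and `C` are freely amalgamated over `A`
    (hfree : ∀ u ∈ B \ A, ∀ v ∈ C \ A, ¬ G.Adj u v)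
    (hw : w ∉ B ∪ C)
    -- `w` is adjacent to exactly two vertices of `B ∪ C`: one in `B∖A`, one in `C∖A`
    (b c : V) (hb : b ∈ B \ A) (hc : c ∈ C \ A) (hbc : b ≠ c)
    (hwb : G.Adj w b) (hwc : G.Adj w c)
    (honly : ∀ x ∈ B ∪ C, G.Adj w x → x = b ∨ x = c)
    -- every vertex of `B∖A` is at distance ≤ 3 from every vertex of `C∖A` in `B ⨿_A C`
    (hdist : ∀ (u v : ((B ∪ C : Finset V) : Set V)),
      (u : V) ∈ B \ A → (v : V) ∈ C \ A →
      ∃ p : (G.induce ((B ∪ C : Finset V) : Set V)).Walk u v, p.length ≤ 3)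
    -- graphs in `K_f` contain no cycles of length < 6
    (hgirth : ∀ s : Finset V, inKf f G s →
      ∀ (v : (s : Set V)) (p : (G.induce (s : Set V)).Walk v v), p.IsCycle →
        6 ≤ p.length) :
    ¬ inKf f G (insert w (B ∪ C)) := by
  intro hKf
  -- memberships
  have hbBC : b ∈ B ∪ C := Finset.mem_union_left _ (Finset.mem_sdiff.1 hb).1
  have hcBC : c ∈ B ∪ C := Finset.mem_union_right _ (Finset.mem_sdiff.1 hc).1
  set t : Finset V := B ∪ C with ht
  set s : Finset V := insert w (B ∪ C) with hs
  have hws : w ∈ s := Finset.mem_insert_self _ _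
  -- the short walk from b to c inside B ∪ C
  obtain ⟨p, hp⟩ := hdist ⟨b, by exact_mod_cast hbBC⟩ ⟨c, by exact_mod_cast hcBC⟩ hb hc
  -- replace by a path
  let q := p.bypass
  have hq : q.IsPath := p.bypass_isPath
  have hqlen : q.length ≤ 3 := le_trans (p.length_bypass_le) hp
  -- homomorphism from induce t to induce s
  have hsub : ∀ x : V, x ∈ t → x ∈ s := fun x hx => Finset.mem_insert_of_mem hx
  let φ : G.induce ((t : Finset V) : Set V) →g G.induce ((s : Finset V) : Set V) :=
    ⟨fun x => ⟨x.1, by exact_mod_cast hsub x.1 (by exact_mod_cast x.2)⟩, fun {a b} h => h⟩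
  have hφinj : Function.Injective φ := by
    intro x y hxy
    have h2 : (φ x).1 = (φ y).1 := congrArg Subtype.val hxy
    exact Subtype.ext h2
  let q' := q.map φ
  have hq' : q'.IsPath := q.map_isPath_of_injective hφinj hq
  -- w is not in the support of q'
  have hwns : (⟨w, by exact_mod_cast hws⟩ : ((s : Finset V) : Set V)) ∉ q'.support := by
    intro hmem
    rw [SimpleGraph.Walk.support_map, List.mem_map] at hmem
    obtain ⟨x, hx, hxw⟩ := hmem
    have : (x : V) = w := congrArg Subtype.val hxw
    have hxt : (x : V) ∈ t := by exact_mod_cast x.2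
    rw [this] at hxt
    exact hw hxt
  -- adjacencies in the induced graph on s
  have hwc' : (G.induce ((s : Finset V) : Set V)).Adj
      ⟨c, by exact_mod_cast hsub c hcBC⟩ ⟨w, by exact_mod_cast hws⟩ := hwc.symm
  have hwb' : (G.induce ((s : Finset V) : Set V)).Adj
      ⟨w, by exact_mod_cast hws⟩ ⟨b, by exact_mod_cast hsub b hbBC⟩ := hwb
  -- the closed walk
  let r := q'.concat hwc'
  have hr : r.IsPath := by
    rw [← SimpleGraph.Walk.isPath_reverse_iff]
    rw [show r.reverse = SimpleGraph.Walk.cons hwc'.symm q'.reverse from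
      q'.reverse_concat hwc']
    rw [SimpleGraph.Walk.cons_isPath_iff]
    refine ⟨hq'.reverse, ?_⟩
    rw [SimpleGraph.Walk.support_reverse, List.mem_reverse]
    exact hwns
  let cyc := SimpleGraph.Walk.cons hwb' r
  have hcyc : cyc.IsCycle := by
    rw [SimpleGraph.Walk.cons_isCycle_iff]
    refine ⟨hr, ?_⟩
    intro hmem
    simp only [r, SimpleGraph.Walk.edges_concat, List.concat_eq_append, List.mem_append,
      List.mem_singleton] at hmem
    rcases hmem with hmem | hmem
    · exact hwns (q'.fst_mem_support_of_mem_edges hmem)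
    · rw [Sym2.eq_iff] at hmem
      rcases hmem with ⟨h1, h2⟩ | ⟨h1, h2⟩
      · have hwc2 : w = c := Subtype.ext_iff.mp h1
        exact hw (hwc2 ▸ hcBC)
      · exact hbc (Subtype.ext_iff.mp h2)
  have hlen : cyc.length ≤ 5 := by
    have : cyc.length = q'.length + 2 := by
      simp [cyc, r, SimpleGraph.Walk.length_concat]
    rw [this, SimpleGraph.Walk.length_map]
    omega
  have := hgirth s hKf _ cyc hcyc
  omega
end
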